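/- Let B be a skew brace, and let I = ⨁_{i∈𝓘} I_i be a restricted direct sum of minimal ideals I_i of B. If J is any ideal of B contained in I, then there is 𝓙 ⊆ 𝓘 with I = J ⊕ ⨁_{j∈𝓙} I_j. Moreover, if every I_i is a non-trivial skew brace (its two operations differ), then J itself equals the direct sum of some subfamily of the I_i. -/

import Mathlib

/-- A skew (left) brace: a type with an additive group structure `(B,+)` and a
multiplicative group structure `(B,∘)` (written `*`), satisfying the skew left
distributive law `a ∘ (b + c) = a ∘ b − a + a ∘ c`.  Addition is not assumed
commutative. -/
class SkewBrace (B : Type*) extends AddGroup B, Group B where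
  skew_mul_add : ∀ a b c : B, a * (b + c) = a * b + -a + a * c

namespace SkewBrace

variable {B : Type*} [SkewBrace B]

/-- `lam a x = −a + a ∘ x`, the lambda map of a skew brace. -/
def lam (a x : B) : B := -a + a * x

/-- The star operation `a ∗ b = λ_a(b) − b = −a + a ∘ b − b`. -/
def sstar (a b : B) : B := -a + a * b + -b

/-- A sub-skew-brace: a subset closed under both group operations and inverses. -/
def IsSubSkewBrace (C : Set B) : Prop :=
  (0 : B) ∈ C ∧ (∀ a ∈ C, ∀ b ∈ C, a + b ∈ C) ∧ (∀ a ∈ C, -a ∈ C) ∧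
    (∀ a ∈ C, ∀ b ∈ C, a * b ∈ C) ∧ (∀ a ∈ C, a⁻¹ ∈ C)

/-- A subgroup of the additive group `(B,+)`, as a subset. -/
def IsAddSubgroup (S : Set B) : Prop :=
  (0 : B) ∈ S ∧ (∀ a ∈ S, ∀ b ∈ S, a + b ∈ S) ∧ (∀ a ∈ S, -a ∈ S)

/-- A subgroup of the multiplicative group `(B,∘)`, as a subset. -/
def IsMulSubgroup (S : Set B) : Prop :=
  (1 : B) ∈ S ∧ (∀ a ∈ S, ∀ b ∈ S, a * b ∈ S) ∧ (∀ a ∈ S, a⁻¹ ∈ S)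

/-- A strong left ideal: an additively normal, `λ`-invariant additive subgroup. -/
def IsStrongLeftIdeal (J : Set B) : Prop :=
  IsAddSubgroup J ∧ (∀ b : B, ∀ j ∈ J, b + j + -b ∈ J) ∧ (∀ b : B, ∀ j ∈ J, lam b j ∈ J)

/-- An ideal: a sub-skew-brace which is additively normal, `λ`-invariant and
multiplicatively normal. -/
def IsIdeal (I : Set B) : Prop :=
  IsSubSkewBrace I ∧ (∀ b : B, ∀ a ∈ I, b + a + -b ∈ I) ∧
    (∀ b : B, ∀ a ∈ I, lam b a ∈ I) ∧ (∀ b : B, ∀ a ∈ I, b * a * b⁻¹ ∈ I)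

/-- Multiplication of the design group `G(B) = (B,+) ⋊_λ (B,∘)`. -/
def gmul (p q : B × B) : B × B := (p.1 + lam p.2 q.1, p.2 * q.2)

/-- Inversion in the design group `G(B)`. -/
def ginv (p : B × B) : B × B := (-(lam p.2⁻¹ p.1), p.2⁻¹)

/-- For a subset `I ⊆ B`, the subset `G(I) = I × I` of the design group. -/
def designSet (I : Set B) : Set (B × B) := {p | p.1 ∈ I ∧ p.2 ∈ I}

/-- The additive subgroup generated by a subset, as a set. -/
def addCl (S : Set B) : Set B := (AddSubgroup.closure S : Set B)

/-- A minimal ideal: a nonzero ideal containing no proper nonzero ideal of `B`. -/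
def IsMinimalIdeal (I : Set B) : Prop :=
  IsIdeal I ∧ I ≠ {0} ∧ ∀ K : Set B, IsIdeal K → K ⊆ I → K = {0} ∨ K = I


lemma mul_zero' (a : B) : a * 0 = a := by
  have h := SkewBrace.skew_mul_add a 0 0
  rw [add_zero, add_assoc] at h
  have : (0:B) = -a + a * 0 := by
    have := add_left_cancel (a := a*0) (b := 0) (c := -a + a*0)
      (by rw [add_zero]; exact h)
    exact this
  rw [eq_comm, neg_add_eq_iff_eq_add, add_zero] at this
  exact this

lemma one_eq_zero : (1 : B) = 0 := by
  have h1 : (1:B) * 0 = 1 := mul_zero' 1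
  rw [one_mul] at h1; exact h1.symm

lemma mul_def (x y : B) : x * y = x + lam x y := by
  simp [lam, ← add_assoc]

lemma lam_add (a x y : B) : lam a (x + y) = lam a x + lam a y := by
  simp only [lam, SkewBrace.skew_mul_add a x y]
  rw [add_assoc, add_assoc, ← add_assoc (a*x)]

lemma lam_zero (a : B) : lam a 0 = 0 := by simp [lam, mul_zero']

lemma lam_neg (a x : B) : lam a (-x) = -(lam a x) := by
  have h := lam_add a x (-x)
  rw [add_neg_cancel, lam_zero] at h
  exact (neg_eq_of_add_eq_zero_right h.symm).symm

lemma lam_mul (a b x : B) : lam (a * b) x = lam a (lam b x) := by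
  have hneg : a * (-b) = a + -(a*b) + a := by
    have h := lam_neg a b
    simp only [lam] at h
    -- h : -a + a * (-b) = -(-a + a*b)
    rw [neg_add_rev] at h
    -- h : -a + a*(-b) = -(a*b) + a
    have := congrArg (fun z => a + z) h
    simpa [← add_assoc] using this
  simp only [lam]
  rw [SkewBrace.skew_mul_add a (-b) (b*x), hneg]
  -- goal : -(a*b) + a*b*x = -a + (a + -(a*b) + a + -a + a*(b*x))
  rw [mul_assoc]
  simp [← add_assoc]

lemma lam_one (x : B) : lam 1 x = x := by
  simp [lam, one_eq_zero]

lemma lam_lam_inv (a x : B) : lam a (lam a⁻¹ x) = x := by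
  rw [← lam_mul, mul_inv_cancel, lam_one]

lemma lam_inv_lam (a x : B) : lam a⁻¹ (lam a x) = x := by
  rw [← lam_mul, inv_mul_cancel, lam_one]

lemma inv_def (x : B) : x⁻¹ = lam x⁻¹ (-x) := by
  have h : x⁻¹ * x = x⁻¹ + lam x⁻¹ x := mul_def _ _
  rw [inv_mul_cancel, one_eq_zero] at h
  rw [lam_neg]
  exact (neg_eq_of_add_eq_zero_left h.symm).symm

lemma mul_eq_conj (x y : B) : x * y = y + lam y (y⁻¹ * x * y) := by
  rw [← mul_def]
  group

lemma sstar_def' (a b : B) : sstar a b = lam a b + -b := rfl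

lemma lam_eq_sstar_add (a b : B) : lam a b = sstar a b + b := by
  simp [sstar_def']

lemma mul_sstar (x y b : B) : sstar (x*y) b = lam x (sstar y b) + sstar x b := by
  rw [sstar_def', lam_mul, lam_eq_sstar_add y b, lam_add, sstar_def', sstar_def']
  simp [← add_assoc]

variable {A C : Set B}

lemma IsIdeal.zero_mem (h : IsIdeal A) : (0:B) ∈ A := h.1.1
lemma IsIdeal.add_mem (h : IsIdeal A) {a b : B} (ha : a ∈ A) (hb : b ∈ A) : a + b ∈ A :=
  h.1.2.1 a ha b hb
lemma IsIdeal.neg_mem (h : IsIdeal A) {a : B} (ha : a ∈ A) : -a ∈ A := h.1.2.2.1 a ha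
lemma IsIdeal.conj_mem (h : IsIdeal A) (g : B) {a : B} (ha : a ∈ A) : g + a + -g ∈ A :=
  h.2.1 g a ha
lemma IsIdeal.lam_mem (h : IsIdeal A) (g : B) {a : B} (ha : a ∈ A) : lam g a ∈ A :=
  h.2.2.1 g a ha
lemma IsIdeal.mconj_mem (h : IsIdeal A) (g : B) {a : B} (ha : a ∈ A) : g * a * g⁻¹ ∈ A :=
  h.2.2.2 g a ha

/-- The ideal as an additive subgroup. -/
def IsIdeal.toAddSubgroup (h : IsIdeal A) : AddSubgroup B where
  carrier := A
  zero_mem' := h.zero_mem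
  add_mem' := fun ha hb => h.add_mem ha hb
  neg_mem' := fun ha => h.neg_mem ha

lemma IsIdeal.normal (h : IsIdeal A) : h.toAddSubgroup.Normal :=
  ⟨fun a ha g => h.conj_mem g ha⟩

lemma IsIdeal.addCl_eq (h : IsIdeal A) : addCl A = A := by
  show ((AddSubgroup.closure ((h.toAddSubgroup : Set B))) : Set B) = (h.toAddSubgroup : Set B)
  rw [AddSubgroup.closure_eq]

lemma isIdeal_zero : IsIdeal ({0} : Set B) := by
  have hz : ∀ g : B, g * 0 * g⁻¹ ∈ ({0} : Set B) := by
    intro g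
    rw [← one_eq_zero, mul_one, mul_inv_cancel, one_eq_zero]
    rfl
  refine ⟨⟨rfl, ?_, ?_, ?_, ?_⟩, ?_, ?_, ?_⟩
  · rintro a rfl b rfl; simp
  · rintro a rfl; simp
  · rintro a rfl b rfl
    rw [Set.mem_singleton_iff, mul_zero']
  · rintro a rfl
    rw [Set.mem_singleton_iff, ← one_eq_zero, inv_one]
  · rintro g a rfl; simp
  · rintro g a rfl
    rw [Set.mem_singleton_iff, lam_zero]
  · rintro g a rfl; exact hz g

lemma IsIdeal.inter (hA : IsIdeal A) (hC : IsIdeal C) : IsIdeal (A ∩ C) := by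
  refine ⟨⟨⟨hA.zero_mem, hC.zero_mem⟩, ?_, ?_, ?_, ?_⟩, ?_, ?_, ?_⟩
  · exact fun a ha b hb => ⟨hA.add_mem ha.1 hb.1, hC.add_mem ha.2 hb.2⟩
  · exact fun a ha => ⟨hA.neg_mem ha.1, hC.neg_mem ha.2⟩
  · exact fun a ha b hb => ⟨hA.1.2.2.2.1 a ha.1 b hb.1, hC.1.2.2.2.1 a ha.2 b hb.2⟩
  · exact fun a ha => ⟨hA.1.2.2.2.2 a ha.1, hC.1.2.2.2.2 a ha.2⟩
  · exact fun g a ha => ⟨hA.conj_mem g ha.1, hC.conj_mem g ha.2⟩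
  · exact fun g a ha => ⟨hA.lam_mem g ha.1, hC.lam_mem g ha.2⟩
  · exact fun g a ha => ⟨hA.mconj_mem g ha.1, hC.mconj_mem g ha.2⟩

lemma IsIdeal.sstar_mem_right (hA : IsIdeal A) (g : B) {b : B} (hb : b ∈ A) :
    sstar g b ∈ A := by
  rw [sstar_def']
  exact hA.add_mem (hA.lam_mem g hb) (hA.neg_mem hb)

lemma IsIdeal.sstar_mem_left (hA : IsIdeal A) {a : B} (ha : a ∈ A) (g : B) :
    sstar a g ∈ A := by
  have hc : g⁻¹ * a * g ∈ A := by simpa using hA.mconj_mem g⁻¹ ha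
  have h2 : g + lam g (g⁻¹ * a * g) + -g ∈ A := hA.conj_mem g (hA.lam_mem g hc)
  have : sstar a g = -a + (g + lam g (g⁻¹ * a * g) + -g) := by
    rw [sstar, mul_eq_conj a g]; simp [← add_assoc]
  rw [this]
  exact hA.add_mem (hA.neg_mem ha) h2



lemma addCl_union_sup (hA : IsIdeal A) (hC : IsIdeal C) :
    AddSubgroup.closure (A ∪ C) = hA.toAddSubgroup ⊔ hC.toAddSubgroup := by
  rw [AddSubgroup.closure_union]
  congr 1
  · exact AddSubgroup.closure_eq hA.toAddSubgroup
  · exact AddSubgroup.closure_eq hC.toAddSubgroup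

open Pointwise in
lemma mem_addCl_union_iff (hA : IsIdeal A) (hC : IsIdeal C) {x : B} :
    x ∈ addCl (A ∪ C) ↔ ∃ a ∈ A, ∃ c ∈ C, x = a + c := by
  haveI := hC.normal
  have h1 : addCl (A ∪ C) = (hA.toAddSubgroup : Set B) + (hC.toAddSubgroup : Set B) := by
    show ((AddSubgroup.closure (A ∪ C) : AddSubgroup B) : Set B) = _
    rw [addCl_union_sup hA hC]
    exact AddSubgroup.add_normal hA.toAddSubgroup hC.toAddSubgroup
  rw [h1]
  constructor
  · rintro ⟨a, ha, c, hc, rfl⟩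
    exact ⟨a, ha, c, hc, rfl⟩
  · rintro ⟨a, ha, c, hc, rfl⟩
    exact Set.add_mem_add ha hc

lemma addCl_mem_zero (T : Set B) : (0:B) ∈ addCl T := AddSubgroup.zero_mem _
lemma addCl_mem_add {T : Set B} {x y : B} (hx : x ∈ addCl T) (hy : y ∈ addCl T) :
    x + y ∈ addCl T := AddSubgroup.add_mem _ hx hy
lemma addCl_mem_neg {T : Set B} {x : B} (hx : x ∈ addCl T) : -x ∈ addCl T :=
  AddSubgroup.neg_mem _ hx
lemma subset_addCl (T : Set B) : T ⊆ addCl T := AddSubgroup.subset_closure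
lemma addCl_mono {T U : Set B} (h : T ⊆ U) : addCl T ⊆ addCl U :=
  AddSubgroup.closure_mono h
lemma addCl_le {T : Set B} {H : AddSubgroup B} (h : T ⊆ (H : Set B)) :
    addCl T ⊆ (H : Set B) := (AddSubgroup.closure_le H).2 h
lemma addCl_le' {T U : Set B} (hU : IsIdeal U) (h : T ⊆ U) : addCl T ⊆ U := by
  have := addCl_le (H := hU.toAddSubgroup) h
  rwa [show (hU.toAddSubgroup : Set B) = U from rfl] at this

lemma addCl_addCl_union_left (X Y : Set B) : addCl (addCl X ∪ Y) = addCl (X ∪ Y) := by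
  show ((AddSubgroup.closure (addCl X ∪ Y)) : Set B) = ((AddSubgroup.closure (X ∪ Y)) : Set B)
  unfold addCl
  rw [AddSubgroup.closure_union, AddSubgroup.closure_union, AddSubgroup.closure_eq]

lemma addCl_addCl_union_right (X Y : Set B) : addCl (X ∪ addCl Y) = addCl (X ∪ Y) := by
  show ((AddSubgroup.closure (X ∪ addCl Y)) : Set B) = ((AddSubgroup.closure (X ∪ Y)) : Set B)
  unfold addCl
  rw [AddSubgroup.closure_union, AddSubgroup.closure_union, AddSubgroup.closure_eq]

lemma IsIdeal.addCl_union (hA : IsIdeal A) (hC : IsIdeal C) : IsIdeal (addCl (A ∪ C)) := by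
  have hmem : ∀ x : B, x ∈ addCl (A ∪ C) ↔ ∃ a ∈ A, ∃ c ∈ C, x = a + c := fun x =>
    mem_addCl_union_iff hA hC
  set M := addCl (A ∪ C)
  have hAM : A ⊆ M := fun a ha => (hmem a).2 ⟨a, ha, 0, hC.zero_mem, by simp⟩
  have hCM : C ⊆ M := fun c hc => (hmem c).2 ⟨0, hA.zero_mem, c, hc, by simp⟩
  have hlamM : ∀ g : B, ∀ m ∈ M, lam g m ∈ M := by
    intro g m hm
    obtain ⟨a, ha, c, hc, rfl⟩ := (hmem m).1 hm
    rw [lam_add]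
    exact addCl_mem_add (hAM (hA.lam_mem g ha)) (hCM (hC.lam_mem g hc))
  have hmulM : ∀ x ∈ M, ∀ y ∈ M, x * y ∈ M := by
    intro x hx y hy
    rw [mul_def]
    exact addCl_mem_add hx (hlamM x y hy)
  refine ⟨⟨addCl_mem_zero _, ?_, ?_, hmulM, ?_⟩, ?_, fun g a ha => hlamM g a ha, ?_⟩
  · exact fun a ha b hb => addCl_mem_add ha hb
  · exact fun a ha => addCl_mem_neg ha
  · intro x hx
    rw [inv_def]
    exact hlamM _ _ (addCl_mem_neg hx)
  · intro g m hm
    obtain ⟨a, ha, c, hc, rfl⟩ := (hmem m).1 hm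
    have : g + (a + c) + -g = (g + a + -g) + (g + c + -g) := by
      simp only [add_assoc, neg_add_cancel_left]
    rw [this]
    exact addCl_mem_add (hAM (hA.conj_mem g ha)) (hCM (hC.conj_mem g hc))
  · intro g m hm
    obtain ⟨a, ha, c, hc, rfl⟩ := (hmem m).1 hm
    have hz : a * lam a⁻¹ c = a + c := by rw [mul_def, lam_lam_inv]
    have hsplit : g * (a + c) * g⁻¹ = (g * a * g⁻¹) * (g * (lam a⁻¹ c) * g⁻¹) := by
      rw [← hz]; group
    rw [hsplit, mul_def (g * a * g⁻¹)]
    exact addCl_mem_add (hAM (hA.mconj_mem g ha))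
      (hlamM _ _ (hCM (hC.mconj_mem g (hC.lam_mem a⁻¹ hc))))

lemma isIdeal_addCl_of_cover {T : Set B}
    (h : ∀ x ∈ addCl T, ∃ C : Set B, IsIdeal C ∧ x ∈ C ∧ C ⊆ addCl T) :
    IsIdeal (addCl T) := by
  have key : ∀ x ∈ addCl T, ∀ y ∈ addCl T,
      ∃ D : Set B, IsIdeal D ∧ x ∈ D ∧ y ∈ D ∧ D ⊆ addCl T := by
    intro x hx y hy
    obtain ⟨Cx, hCx, hxC, hCxT⟩ := h x hx
    obtain ⟨Cy, hCy, hyC, hCyT⟩ := h y hy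
    refine ⟨addCl (Cx ∪ Cy), hCx.addCl_union hCy, subset_addCl _ (Or.inl hxC),
      subset_addCl _ (Or.inr hyC), ?_⟩
    exact addCl_le (H := AddSubgroup.closure T) (Set.union_subset hCxT hCyT)
  refine ⟨⟨addCl_mem_zero _, fun a ha b hb => addCl_mem_add ha hb,
      fun a ha => addCl_mem_neg ha, ?_, ?_⟩, ?_, ?_, ?_⟩
  · intro x hx y hy
    obtain ⟨D, hD, hxD, hyD, hDT⟩ := key x hx y hy
    exact hDT (hD.1.2.2.2.1 x hxD y hyD)
  · intro x hx
    obtain ⟨Cx, hCx, hxC, hCxT⟩ := h x hx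
    exact hCxT (hCx.1.2.2.2.2 x hxC)
  · intro g a ha
    obtain ⟨Cx, hCx, hxC, hCxT⟩ := h a ha
    exact hCxT (hCx.conj_mem g hxC)
  · intro g a ha
    obtain ⟨Cx, hCx, hxC, hCxT⟩ := h a ha
    exact hCxT (hCx.lam_mem g hxC)
  · intro g a ha
    obtain ⟨Cx, hCx, hxC, hCxT⟩ := h a ha
    exact hCxT (hCx.mconj_mem g hxC)

lemma exists_finset_of_mem_addCl_union {κ : Type*} (A₀ : Set B) (S : κ → Set B) {x : B}
    (hx : x ∈ addCl (A₀ ∪ ⋃ k, S k)) : ∃ F : Finset κ, x ∈ addCl (A₀ ∪ ⋃ k ∈ (F : Set κ), S k) := by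
  classical
  induction hx using AddSubgroup.closure_induction with
  | mem t ht =>
    rcases ht with ht | ht
    · exact ⟨∅, subset_addCl _ (Or.inl ht)⟩
    · obtain ⟨k, hk⟩ := Set.mem_iUnion.1 ht
      refine ⟨{k}, subset_addCl _ (Or.inr ?_)⟩
      simp only [Finset.coe_singleton, Set.mem_iUnion]
      exact ⟨k, rfl, hk⟩
  | zero => exact ⟨∅, addCl_mem_zero _⟩
  | add x y hx hy ihx ihy =>
    obtain ⟨F₁, h₁⟩ := ihx
    obtain ⟨F₂, h₂⟩ := ihy
    refine ⟨F₁ ∪ F₂, addCl_mem_add (addCl_mono ?_ h₁) (addCl_mono ?_ h₂)⟩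
    · exact Set.union_subset_union_right _ (Set.biUnion_subset_biUnion_left
        (Finset.coe_subset.2 Finset.subset_union_left))
    · exact Set.union_subset_union_right _ (Set.biUnion_subset_biUnion_left
        (Finset.coe_subset.2 Finset.subset_union_right))
  | neg x hx ihx =>
    obtain ⟨F, hF⟩ := ihx
    exact ⟨F, addCl_mem_neg hF⟩

lemma isIdeal_addCl_union_finset (hA : IsIdeal A) {κ : Type*} (S : κ → Set B)
    (hS : ∀ k, IsIdeal (S k)) (F : Finset κ) :
    IsIdeal (addCl (A ∪ ⋃ k ∈ (F : Set κ), S k)) := by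
  classical
  induction F using Finset.induction with
  | empty =>
    simpa [hA.addCl_eq] using hA
  | @insert a F ha ih =>
    have hset : A ∪ ⋃ k ∈ ((insert a F : Finset κ) : Set κ), S k
        = (A ∪ ⋃ k ∈ (F : Set κ), S k) ∪ S a := by
      simp only [Finset.coe_insert, Set.biUnion_insert]
      rw [Set.union_comm (S a), ← Set.union_assoc]
    rw [hset, ← addCl_addCl_union_left]
    exact ih.addCl_union (hS a)

lemma isIdeal_addCl_union_iUnion (hA : IsIdeal A) {κ : Type*} (S : κ → Set B)
    (hS : ∀ k, IsIdeal (S k)) : IsIdeal (addCl (A ∪ ⋃ k, S k)) := by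
  apply isIdeal_addCl_of_cover
  intro x hx
  obtain ⟨F, hF⟩ := exists_finset_of_mem_addCl_union A S hx
  refine ⟨addCl (A ∪ ⋃ k ∈ (F : Set κ), S k), isIdeal_addCl_union_finset hA S hS F, hF, ?_⟩
  apply addCl_le (H := AddSubgroup.closure (A ∪ ⋃ k, S k))
  apply Set.union_subset
  · exact fun t ht => subset_addCl _ (Or.inl ht)
  · intro t ht
    apply subset_addCl
    right
    obtain ⟨k, _, hk⟩ := Set.mem_iUnion₂.1 ht
    exact Set.mem_iUnion.2 ⟨k, hk⟩

lemma isIdeal_addCl_iUnion {κ : Type*} (S : κ → Set B) (hS : ∀ k, IsIdeal (S k)) :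
    IsIdeal (addCl (⋃ k, S k)) := by
  have h := isIdeal_addCl_union_iUnion isIdeal_zero S hS
  have : ({0} : Set B) ∪ (⋃ k, S k) = addCl (⋃ k, S k) → True := fun _ => trivial
  have hEq : addCl (({0} : Set B) ∪ ⋃ k, S k) = addCl (⋃ k, S k) := by
    apply Set.Subset.antisymm
    · apply addCl_le (H := AddSubgroup.closure (⋃ k, S k))
      apply Set.union_subset
      · intro t ht; rw [Set.mem_singleton_iff] at ht; subst ht; exact addCl_mem_zero _
      · exact subset_addCl _
    · exact addCl_mono Set.subset_union_right
  rwa [hEq] at h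


lemma sstar_eq_zero_of_inter {A C : Set B} (hA : IsIdeal A) (hC : IsIdeal C)
    (h : A ∩ C ⊆ {0}) {a c : B} (ha : a ∈ A) (hc : c ∈ C) : sstar a c = 0 :=
  h ⟨hA.sstar_mem_left ha c, hC.sstar_mem_right a hc⟩


/-- Remak's theorem for skew braces: if `I = ⨁_i I_i` is a restricted direct sum
of minimal ideals and `J ⊆ I` is an ideal, then `I = J ⊕ ⨁_{j∈𝓙} I_j` for some
`𝓙`; moreover if all `I_i` are non-trivial, `J` is itself the direct sum of a
subfamily of the `I_i`. -/
theorem remak {ι : Type*} (I : ι → Set B) (hmin : ∀ i, IsMinimalIdeal (I i))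
    (hdirect : ∀ i : ι, I i ∩ addCl (⋃ j ∈ ({i}ᶜ : Set ι), I j) = {0})
    (J : Set B) (hJ : IsIdeal J) (hJsub : J ⊆ addCl (⋃ i, I i)) :
    (∃ 𝓙 : Set ι,
      addCl (⋃ i, I i) = addCl (J ∪ ⋃ j ∈ 𝓙, I j) ∧
      J ∩ addCl (⋃ j ∈ 𝓙, I j) = {0} ∧
      ∀ j ∈ 𝓙, I j ∩ addCl (J ∪ ⋃ j' ∈ 𝓙 \ {j}, I j') = {0}) ∧
    ((∀ i, ∃ a ∈ I i, ∃ b ∈ I i, a + b ≠ a * b) →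
      ∃ 𝓚 : Set ι, J = addCl (⋃ k ∈ 𝓚, I k)) := by
  classical
  have hIid : ∀ i, IsIdeal (I i) := fun i => (hmin i).1
  have hzero : ∀ X : Set B, (0:B) ∈ X → (∀ x ∈ X, x = 0) → X = {0} := by
    intro X h0 h
    ext x
    simp only [Set.mem_singleton_iff]
    exact ⟨h x, fun hx => hx ▸ h0⟩
  have hKid : ∀ 𝓣 : Set ι, IsIdeal (addCl (⋃ j ∈ 𝓣, I j)) := by
    intro 𝓣
    rw [Set.biUnion_eq_iUnion]
    exact isIdeal_addCl_iUnion _ (fun k => hIid k)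
  have hMid : ∀ 𝓣 : Set ι, IsIdeal (addCl (J ∪ ⋃ j ∈ 𝓣, I j)) := by
    intro 𝓣
    rw [Set.biUnion_eq_iUnion]
    exact isIdeal_addCl_union_iUnion hJ _ (fun k => hIid k)
  have hImem : ∀ (𝓣 : Set ι) (j : ι), j ∈ 𝓣 → I j ⊆ addCl (⋃ j' ∈ 𝓣, I j') :=
    fun 𝓣 j hj x hx => subset_addCl _ (Set.mem_biUnion hj hx)
  have hKmono : ∀ {𝓣 𝓣' : Set ι}, 𝓣 ⊆ 𝓣' →
      addCl (⋃ j ∈ 𝓣, I j) ⊆ addCl (⋃ j ∈ 𝓣', I j) :=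
    fun h => addCl_mono (Set.biUnion_subset_biUnion_left h)
  have hMmono : ∀ {𝓣 𝓣' : Set ι}, 𝓣 ⊆ 𝓣' →
      addCl (J ∪ ⋃ j ∈ 𝓣, I j) ⊆ addCl (J ∪ ⋃ j ∈ 𝓣', I j) :=
    fun h => addCl_mono (Set.union_subset_union_right _ (Set.biUnion_subset_biUnion_left h))
  have hKsubM : ∀ 𝓣 : Set ι, addCl (⋃ j ∈ 𝓣, I j) ⊆ addCl (J ∪ ⋃ j ∈ 𝓣, I j) :=
    fun 𝓣 => addCl_mono Set.subset_union_right
  have hJsubM : ∀ 𝓣 : Set ι, J ⊆ addCl (J ∪ ⋃ j ∈ 𝓣, I j) :=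
    fun 𝓣 x hx => subset_addCl _ (Or.inl hx)
  have hMsubTot : ∀ 𝓣 : Set ι, addCl (J ∪ ⋃ j ∈ 𝓣, I j) ⊆ addCl (⋃ i, I i) := by
    intro 𝓣
    apply addCl_le (H := AddSubgroup.closure (⋃ i, I i))
    apply Set.union_subset hJsub
    intro x hx
    obtain ⟨j, _, hj⟩ := Set.mem_iUnion₂.1 hx
    exact subset_addCl _ (Set.mem_iUnion.2 ⟨j, hj⟩)
  have hdecM : ∀ (𝓣 : Set ι) {x : B}, x ∈ addCl (J ∪ ⋃ j ∈ 𝓣, I j) →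
      ∃ a ∈ J, ∃ c ∈ addCl (⋃ j ∈ 𝓣, I j), x = a + c := by
    intro 𝓣 x hx
    rw [← addCl_addCl_union_right] at hx
    exact (mem_addCl_union_iff hJ (hKid 𝓣)).1 hx
  have hfinmem : ∀ (A₀ : Set B) (U : Set ι) {x : B}, x ∈ addCl (A₀ ∪ ⋃ j ∈ U, I j) →
      ∃ F : Finset ι, ↑F ⊆ U ∧ x ∈ addCl (A₀ ∪ ⋃ j ∈ (F : Set ι), I j) := by
    intro A₀ U x hx
    rw [Set.biUnion_eq_iUnion] at hx
    obtain ⟨F, hF⟩ := exists_finset_of_mem_addCl_union A₀ _ hx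
    refine ⟨F.image Subtype.val, ?_, ?_⟩
    · intro j hj
      simp only [Finset.coe_image, Set.mem_image] at hj
      obtain ⟨k, _, rfl⟩ := hj
      exact k.property
    · refine addCl_mono (Set.union_subset_union_right _ ?_) hF
      intro b hb
      simp only [Set.mem_iUnion] at hb
      obtain ⟨k, hk, hbk⟩ := hb
      refine Set.mem_biUnion ?_ hbk
      simp only [Finset.coe_image, Set.mem_image]
      exact ⟨k, hk, rfl⟩
  -- The collection of independent subfamilies
  set Good : Set (Set ι) := {𝓣 | J ∩ addCl (⋃ j ∈ 𝓣, I j) = {0} ∧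
    ∀ j ∈ 𝓣, I j ∩ addCl (J ∪ ⋃ j' ∈ 𝓣 \ {j}, I j') = {0}} with hGoodDef
  have hGoodEmpty : (∅ : Set ι) ∈ Good := by
    constructor
    · refine hzero _ ⟨hJ.zero_mem, addCl_mem_zero _⟩ ?_
      intro x hx
      have hx2 := hx.2
      rw [show (⋃ j ∈ (∅ : Set ι), I j) = (∅ : Set B) by simp] at hx2
      have : x ∈ ((⊥ : AddSubgroup B) : Set B) := by
        rwa [show addCl (∅ : Set B) = ((⊥ : AddSubgroup B) : Set B) by
          unfold addCl; rw [AddSubgroup.closure_empty]] at hx2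
      simpa using this
    · intro j hj
      simp at hj
  have hchainfin : ∀ (c : Set (Set ι)), IsChain (· ⊆ ·) c → ∀ t₀ ∈ c,
      ∀ (F : Finset ι), ↑F ⊆ ⋃₀ c → ∃ t ∈ c, ↑F ⊆ t := by
    intro c hc t₀ ht₀ F
    induction F using Finset.induction with
    | empty => intro _; exact ⟨t₀, ht₀, by simp⟩
    | @insert a F ha ih =>
      intro hsub
      have hFsub : ↑F ⊆ ⋃₀ c := by
        refine subset_trans ?_ hsub
        intro x hx
        simp only [Finset.coe_insert, Set.mem_insert_iff]
        exact Or.inr hx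
      obtain ⟨t, htc, htF⟩ := ih hFsub
      have haU : a ∈ ⋃₀ c := hsub (by simp)
      obtain ⟨s, hsc, has⟩ := haU
      by_cases hts : t = s
      · subst hts
        refine ⟨t, htc, ?_⟩
        intro x hx
        simp only [Finset.coe_insert, Set.mem_insert_iff] at hx
        rcases hx with rfl | hx
        exacts [has, htF hx]
      · rcases hc.total htc hsc with h | h
        · refine ⟨s, hsc, ?_⟩
          intro x hx
          simp only [Finset.coe_insert, Set.mem_insert_iff] at hx
          rcases hx with rfl | hx
          exacts [has, h (htF hx)]
        · refine ⟨t, htc, ?_⟩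
          intro x hx
          simp only [Finset.coe_insert, Set.mem_insert_iff] at hx
          rcases hx with rfl | hx
          exacts [h has, htF hx]
  have hchain : ∀ c ⊆ Good, IsChain (· ⊆ ·) c → c.Nonempty →
      ∃ ub ∈ Good, ∀ s ∈ c, s ⊆ ub := by
    intro c hcG hc ⟨t₀, ht₀⟩
    refine ⟨⋃₀ c, ⟨?_, ?_⟩, fun s hs => Set.subset_sUnion_of_mem hs⟩
    · refine hzero _ ⟨hJ.zero_mem, addCl_mem_zero _⟩ ?_
      rintro x ⟨hxJ, hxK⟩
      have hx' : x ∈ addCl ((∅ : Set B) ∪ ⋃ j ∈ ⋃₀ c, I j) := by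
        rwa [Set.empty_union]
      obtain ⟨F, hFsub, hxF⟩ := hfinmem ∅ (⋃₀ c) hx'
      rw [Set.empty_union] at hxF
      obtain ⟨t, htc, htF⟩ := hchainfin c hc t₀ ht₀ F hFsub
      have : x ∈ J ∩ addCl (⋃ j ∈ t, I j) := ⟨hxJ, hKmono htF hxF⟩
      rw [(hcG htc).1] at this
      exact this
    · rintro j ⟨t₁, ht₁c, hjt₁⟩
      refine hzero _ ⟨(hIid j).zero_mem, addCl_mem_zero _⟩ ?_
      rintro x ⟨hxI, hxM⟩
      obtain ⟨F, hFsub, hxF⟩ := hfinmem J (⋃₀ c \ {j}) hxM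
      have hinsSub : ↑(insert j F) ⊆ ⋃₀ c := by
        intro y hy
        simp only [Finset.coe_insert, Set.mem_insert_iff] at hy
        rcases hy with rfl | hy
        exacts [⟨t₁, ht₁c, hjt₁⟩, (hFsub hy).1]
      obtain ⟨t, htc, htF⟩ := hchainfin c hc t₀ ht₀ (insert j F) hinsSub
      have hjt : j ∈ t := htF (by simp)
      have hFtj : (F : Set ι) ⊆ t \ {j} := by
        intro y hy
        exact ⟨htF (by simp only [Finset.coe_insert, Set.mem_insert_iff]; exact Or.inr hy),
          (hFsub hy).2⟩
      have : x ∈ I j ∩ addCl (J ∪ ⋃ j' ∈ t \ {j}, I j') := ⟨hxI, hMmono hFtj hxF⟩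
      rw [(hcG htc).2 j hjt] at this
      exact this
  obtain ⟨𝓙, -, hmax⟩ := zorn_subset_nonempty Good hchain ∅ hGoodEmpty
  have h𝓙good : 𝓙 ∈ Good := hmax.1
  -- key claim: each I i is contained in M = addCl (J ∪ ⋃_{𝓙})
  have hclaim : ∀ i, I i ⊆ addCl (J ∪ ⋃ j ∈ 𝓙, I j) := by
    intro i
    by_cases hi : i ∈ 𝓙
    · exact subset_trans (hImem 𝓙 i hi) (hKsubM 𝓙)
    · have hPid : IsIdeal (I i ∩ addCl (J ∪ ⋃ j ∈ 𝓙, I j)) := (hIid i).inter (hMid 𝓙)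
      rcases (hmin i).2.2 _ hPid Set.inter_subset_left with hP0 | hPI
      · exfalso
        have hGoodIns : insert i 𝓙 ∈ Good := by
          constructor
          · refine hzero _ ⟨hJ.zero_mem, addCl_mem_zero _⟩ ?_
            rintro x ⟨hxJ, hxK⟩
            rw [show (⋃ j ∈ insert i 𝓙, I j) = I i ∪ ⋃ j ∈ 𝓙, I j from Set.biUnion_insert _ _ _,
              ← addCl_addCl_union_right] at hxK
            obtain ⟨a, haI, k, hkK, hxak⟩ := (mem_addCl_union_iff (hIid i) (hKid 𝓙)).1 hxK
            have haM : a ∈ addCl (J ∪ ⋃ j ∈ 𝓙, I j) := by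
              have : a = x + -k := by rw [hxak]; simp [add_assoc]
              rw [this]
              exact addCl_mem_add (hJsubM 𝓙 hxJ) (addCl_mem_neg (hKsubM 𝓙 hkK))
            have ha0 : a = 0 := by
              have : a ∈ I i ∩ addCl (J ∪ ⋃ j ∈ 𝓙, I j) := ⟨haI, haM⟩
              rwa [hP0, Set.mem_singleton_iff] at this
            have hxk : x ∈ J ∩ addCl (⋃ j ∈ 𝓙, I j) := by
              refine ⟨hxJ, ?_⟩
              rw [hxak, ha0, zero_add]
              exact hkK
            rwa [h𝓙good.1, Set.mem_singleton_iff] at hxk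
          · intro j hj
            rcases Set.mem_insert_iff.1 hj with rfl | hj𝓙
            · rw [Set.insert_diff_self_of_notMem hi]
              exact hP0
            · have hji : j ≠ i := fun h => hi (h ▸ hj𝓙)
              have hset : insert i 𝓙 \ {j} = insert i (𝓙 \ {j}) :=
                Set.insert_diff_of_notMem _ (by simp [hji.symm])
              rw [hset]
              refine hzero _ ⟨(hIid j).zero_mem, addCl_mem_zero _⟩ ?_
              rintro x ⟨hxI, hxM⟩
              rw [show (⋃ j' ∈ insert i (𝓙 \ {j}), I j') = I i ∪ ⋃ j' ∈ 𝓙 \ {j}, I j' from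
                  Set.biUnion_insert _ _ _,
                show J ∪ (I i ∪ ⋃ j' ∈ 𝓙 \ {j}, I j') =
                  (J ∪ ⋃ j' ∈ 𝓙 \ {j}, I j') ∪ I i by
                    rw [Set.union_comm (I i), ← Set.union_assoc],
                ← addCl_addCl_union_left] at hxM
              obtain ⟨m, hmM, a, haI, hxma⟩ :=
                (mem_addCl_union_iff (hMid (𝓙 \ {j})) (hIid i)).1 hxM
              have haM : a ∈ addCl (J ∪ ⋃ j' ∈ 𝓙, I j') := by
                have : a = -m + x := by rw [hxma]; simp [← add_assoc]
                rw [this]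
                refine addCl_mem_add (addCl_mem_neg (hMmono Set.diff_subset hmM)) ?_
                exact hKsubM 𝓙 (hImem 𝓙 j hj𝓙 hxI)
              have ha0 : a = 0 := by
                have : a ∈ I i ∩ addCl (J ∪ ⋃ j' ∈ 𝓙, I j') := ⟨haI, haM⟩
                rwa [hP0, Set.mem_singleton_iff] at this
              have hxm : x ∈ I j ∩ addCl (J ∪ ⋃ j' ∈ 𝓙 \ {j}, I j') := by
                refine ⟨hxI, ?_⟩
                rw [hxma, ha0, add_zero]
                exact hmM
              rwa [h𝓙good.2 j hj𝓙, Set.mem_singleton_iff] at hxm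
        have := hmax.2 hGoodIns (Set.subset_insert i 𝓙) (Set.mem_insert i 𝓙)
        exact hi this
      · intro x hx
        rw [← hPI] at hx
        exact hx.2
  have heq : addCl (⋃ i, I i) = addCl (J ∪ ⋃ j ∈ 𝓙, I j) := by
    apply Set.Subset.antisymm
    · exact addCl_le' (hMid 𝓙) (Set.iUnion_subset hclaim)
    · exact hMsubTot 𝓙
  refine ⟨⟨𝓙, heq, h𝓙good.1, h𝓙good.2⟩, ?_⟩
  intro hnontriv
  have hKIi : ∀ i ∉ 𝓙, I i ∩ addCl (⋃ j ∈ 𝓙, I j) ⊆ {0} := by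
    intro i hi x hx
    have h𝓙ic : 𝓙 ⊆ ({i}ᶜ : Set ι) := by
      intro j hj
      simp only [Set.mem_compl_iff, Set.mem_singleton_iff]
      rintro rfl
      exact hi hj
    rw [← hdirect i]
    exact ⟨hx.1, hKmono h𝓙ic hx.2⟩
  have hIsubJ : ∀ i ∉ 𝓙, I i ⊆ J := by
    intro i hi
    have hPid : IsIdeal (J ∩ I i) := hJ.inter (hIid i)
    rcases (hmin i).2.2 _ hPid Set.inter_subset_right with hP0 | hPI
    · exfalso
      obtain ⟨a, ha, b, hb, hne⟩ := hnontriv i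
      have haM : a ∈ addCl (J ∪ ⋃ j ∈ 𝓙, I j) := by
        rw [← heq]
        exact subset_addCl _ (Set.mem_iUnion.2 ⟨i, ha⟩)
      obtain ⟨j₀, hj₀, k, hk, hak⟩ := hdecM 𝓙 haM
      have hk' : lam j₀⁻¹ k ∈ addCl (⋃ j ∈ 𝓙, I j) := (hKid 𝓙).lam_mem _ hk
      have hamul : a = j₀ * lam j₀⁻¹ k := by
        rw [mul_def, lam_lam_inv]
        exact hak
      have hsk : sstar (lam j₀⁻¹ k) b = 0 := by
        refine sstar_eq_zero_of_inter (hKid 𝓙) (hIid i) ?_ hk' hb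
        intro y hy
        exact hKIi i hi ⟨hy.2, hy.1⟩
      have hsab : sstar a b = sstar j₀ b := by
        rw [hamul, mul_sstar, hsk, lam_zero, zero_add]
      have h1 : sstar a b ∈ J := by
        rw [hsab]
        exact hJ.sstar_mem_left hj₀ b
      have h2 : sstar a b ∈ I i := (hIid i).sstar_mem_right a hb
      have h0 : sstar a b = 0 := by
        have : sstar a b ∈ J ∩ I i := ⟨h1, h2⟩
        rwa [hP0, Set.mem_singleton_iff] at this
      apply hne
      rw [mul_def, lam_eq_sstar_add, h0, zero_add]
    · intro x hx
      rw [← hPI] at hx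
      exact hx.1
  refine ⟨𝓙ᶜ, ?_⟩
  have hLsubJ : addCl (⋃ k ∈ (𝓙ᶜ : Set ι), I k) ⊆ J :=
    addCl_le' hJ (Set.iUnion₂_subset fun k hk => hIsubJ k hk)
  apply Set.Subset.antisymm
  · intro x hx
    have hxTot : x ∈ addCl (⋃ i, I i) := hJsub hx
    have hsplit : (⋃ i, I i) = (⋃ k ∈ (𝓙ᶜ : Set ι), I k) ∪ (⋃ j ∈ 𝓙, I j) := by
      ext b
      simp only [Set.mem_iUnion, Set.mem_union, exists_prop]
      constructor
      · rintro ⟨i, hi⟩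
        by_cases h : i ∈ 𝓙
        · exact Or.inr ⟨i, h, hi⟩
        · exact Or.inl ⟨i, h, hi⟩
      · rintro (⟨i, _, hi⟩ | ⟨i, _, hi⟩) <;> exact ⟨i, hi⟩
    rw [hsplit, ← addCl_addCl_union_left, ← addCl_addCl_union_right] at hxTot
    obtain ⟨u, hu, v, hv, huv⟩ := (mem_addCl_union_iff (hKid 𝓙ᶜ) (hKid 𝓙)).1 hxTot
    have huJ : u ∈ J := hLsubJ hu
    have hvJ : v ∈ J := by
      have hveq : v = -u + x := by rw [huv]; simp [← add_assoc]
      rw [hveq]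
      exact hJ.add_mem (hJ.neg_mem huJ) hx
    have hv0 : v = 0 := by
      have : v ∈ J ∩ addCl (⋃ j ∈ 𝓙, I j) := ⟨hvJ, hv⟩
      rwa [h𝓙good.1, Set.mem_singleton_iff] at this
    rw [huv, hv0, add_zero]
    exact hu
  · exact hLsubJ



end SkewBrace
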